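/- Let C₀ > 0, θ ∈ (0,2], K > 0, and set ε := 1/(1+θ), so that 1−ε = εθ = θ/(θ+1). There exists a constant C' > 0 such that for every t ≥ 0: exp(−⟨t⟩^{1−ε}/((1−ε)C₀)) + ∫_0^t exp(−(⟨t⟩^{1−ε} − ⟨s⟩^{1−ε})/((1−ε)C₀)) · ⟨s⟩^{-ε} · exp(−2K⟨s⟩^{εθ}) ds ≤ C' exp(−(K/C') t^{θ/(θ+1)}). -/

import Mathlib

/-- The Japanese bracket `⟨t⟩ = (1 + t²)^{1/2}` on `ℝ`. -/
noncomputable def jb (t : ℝ) : ℝ := Real.sqrt (1 + t ^ 2)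

/-!
Put `a = θ/(θ+1)`, so that `1 - ε = εθ = a`, and `m = min (1/(a C₀)) (2K)`. For `0 ≤ s ≤ t`,
`⟨s⟩^{-ε} ≤ 1` and splitting `⟨t⟩^a = (⟨t⟩^a - ⟨s⟩^a) + ⟨s⟩^a` show that the integrand, and the
first term, are at most `exp (-m ⟨t⟩^a) ≤ exp (-m t^a)`. The left-hand side is therefore at most
`(1 + t) exp (-m t^a)`, and the linear factor is absorbed by half of the stretched exponential.
-/

open Real Set MeasureTheory

lemma one_le_jb (t : ℝ) : 1 ≤ jb t :=
  Real.one_le_sqrt.2 (le_add_of_nonneg_right (sq_nonneg t))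

lemma jb_pos (t : ℝ) : 0 < jb t :=
  one_pos.trans_le (one_le_jb t)

lemma le_jb (t : ℝ) : t ≤ jb t :=
  (le_abs_self t).trans (Real.abs_le_sqrt (le_add_of_nonneg_left zero_le_one))

lemma jb_le_jb {s t : ℝ} (h : |s| ≤ |t|) : jb s ≤ jb t :=
  Real.sqrt_le_sqrt (add_le_add_right (sq_le_sq.2 h) 1)

lemma min_mul_le_mul_sub_add_mul {c d S T : ℝ} (hS : 0 ≤ S) (hST : S ≤ T) :
    min c d * T ≤ c * (T - S) + d * S := by
  have hTS : 0 ≤ T - S := sub_nonneg.2 hST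
  calc min c d * T = min c d * (T - S) + min c d * S := by ring
    _ ≤ c * (T - S) + d * S := by gcongr; exacts [min_le_left c d, min_le_right c d]

lemma setIntegral_Icc_le_of_abs_le {f : ℝ → ℝ} {a b M : ℝ} (hab : a ≤ b)
    (hf : ∀ x ∈ Icc a b, |f x| ≤ M) : ∫ x in Icc a b, f x ≤ M * (b - a) := by
  have h := norm_setIntegral_le_of_norm_le_const (μ := volume) measure_Icc_lt_top
    fun x hx => (Real.norm_eq_abs (f x)).trans_le (hf x hx)
  rw [Real.volume_real_Icc_of_le hab] at h
  exact (le_abs_self _).trans h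

lemma rpow_le_mul_exp_mul {x b m : ℝ} (hx : 0 ≤ x) (hb : 0 < b) (hm : 0 < m) :
    x ^ b ≤ (b / m) ^ b * exp (m * x) := by
  have hlin : x ≤ b / m * exp (m * x / b) := by
    have := add_one_le_exp (m * x / b)
    rw [div_mul_eq_mul_div, le_div_iff₀ hm]
    rw [div_add_one hb.ne', div_le_iff₀ hb] at this
    nlinarith
  calc x ^ b ≤ (b / m * exp (m * x / b)) ^ b := by gcongr
    _ = (b / m) ^ b * exp (m * x) := by
      rw [mul_rpow (by positivity) (exp_pos _).le, ← exp_mul, div_mul_cancel₀ _ hb.ne']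

lemma one_add_le_mul_exp_mul_rpow {a m t : ℝ} (ha : 0 < a) (hm : 0 < m) (ht : 0 ≤ t) :
    1 + t ≤ (1 + (a⁻¹ / m) ^ a⁻¹) * exp (m * t ^ a) := by
  have hlin : t ≤ (a⁻¹ / m) ^ a⁻¹ * exp (m * t ^ a) := by
    simpa [rpow_rpow_inv ht ha.ne'] using
      rpow_le_mul_exp_mul (rpow_nonneg ht a) (inv_pos.2 ha) hm
  have hone : 1 ≤ exp (m * t ^ a) := one_le_exp (by positivity)
  linarith

lemma exists_one_add_mul_exp_neg_le {a m : ℝ} (ha : 0 < a) (hm : 0 < m) (K : ℝ) :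
    ∃ C' : ℝ, 0 < C' ∧ ∀ t : ℝ, 0 ≤ t →
      (1 + t) * exp (-(m * t ^ a)) ≤ C' * exp (-(K / C') * t ^ a) := by
  set G := 1 + (a⁻¹ / (m / 2)) ^ a⁻¹
  have hG : 0 < G := by positivity
  have hC' : 0 < max G (2 * K / m) := lt_max_of_lt_left hG
  refine ⟨max G (2 * K / m), hC', fun t ht => ?_⟩
  have hrate : K / max G (2 * K / m) ≤ m / 2 := by
    rw [div_le_iff₀ hC']
    calc K = m / 2 * (2 * K / m) := by field_simp
      _ ≤ m / 2 * max G (2 * K / m) := by gcongr; exact le_max_right _ _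
  have hta : 0 ≤ t ^ a := rpow_nonneg ht a
  calc (1 + t) * exp (-(m * t ^ a))
      ≤ G * exp (m / 2 * t ^ a) * exp (-(m * t ^ a)) := by
        gcongr
        exact one_add_le_mul_exp_mul_rpow ha (half_pos hm) ht
    _ = G * exp (-(m / 2) * t ^ a) := by rw [mul_assoc, ← exp_add]; ring_nf
    _ ≤ max G (2 * K / m) * exp (-(K / max G (2 * K / m)) * t ^ a) := by
        gcongr
        exact le_max_left _ _

lemma convolution_integrand_le {a ε C₀ K s t : ℝ} (ha : 0 ≤ a) (hε : 0 ≤ ε) (hs : 0 ≤ s)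
    (hst : s ≤ t) :
    exp (-(jb t ^ a - jb s ^ a) / (a * C₀)) * jb s ^ (-ε) * exp (-2 * K * jb s ^ a) ≤
      exp (-(min (1 / (a * C₀)) (2 * K) * jb t ^ a)) := by
  have hS : 0 ≤ jb s ^ a := rpow_nonneg (jb_pos s).le a
  have hST : jb s ^ a ≤ jb t ^ a := by
    gcongr
    · exact (jb_pos s).le
    · exact jb_le_jb (abs_le_abs hst (by linarith))
  have hdecay : jb s ^ (-ε) ≤ 1 := rpow_le_one_of_one_le_of_nonpos (one_le_jb s) (neg_nonpos.2 hε)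
  calc exp (-(jb t ^ a - jb s ^ a) / (a * C₀)) * jb s ^ (-ε) * exp (-2 * K * jb s ^ a)
      ≤ exp (-(jb t ^ a - jb s ^ a) / (a * C₀)) * 1 * exp (-2 * K * jb s ^ a) := by gcongr
    _ = exp (-(1 / (a * C₀) * (jb t ^ a - jb s ^ a) + 2 * K * jb s ^ a)) := by
        rw [mul_one, ← exp_add]; ring_nf
    _ ≤ exp (-(min (1 / (a * C₀)) (2 * K) * jb t ^ a)) :=
        exp_le_exp.2 (neg_le_neg (min_mul_le_mul_sub_add_mul hS hST))

theorem stretched_exponential_decay_convolution_estimate (C₀ : ℝ) (hC₀ : 0 < C₀)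
    (θ : ℝ) (hθ : θ ∈ Set.Ioc (0 : ℝ) 2) (K : ℝ) (hK : 0 < K)
    (ε : ℝ) (hε : ε = 1 / (1 + θ)) :
    ∃ C' : ℝ, 0 < C' ∧ ∀ t : ℝ, 0 ≤ t →
      Real.exp (-(jb t) ^ (1 - ε) / ((1 - ε) * C₀)) +
        (∫ s in Set.Icc (0 : ℝ) t,
          Real.exp (-((jb t) ^ (1 - ε) - (jb s) ^ (1 - ε)) / ((1 - ε) * C₀)) *
            (jb s) ^ (-ε) * Real.exp (-2 * K * (jb s) ^ (ε * θ))) ≤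
      C' * Real.exp (-(K / C') * t ^ (θ / (θ + 1))) := by
  have hθ0 : 0 < θ := hθ.1
  have h1ε : 1 - ε = θ / (θ + 1) := by rw [hε]; field_simp; ring
  have hεθ : ε * θ = θ / (θ + 1) := by rw [hε]; field_simp; ring
  set a := θ / (θ + 1)
  have ha : 0 < a := by positivity
  have hε0 : 0 ≤ ε := by rw [hε]; positivity
  set m := min (1 / (a * C₀)) (2 * K)
  have hm : 0 < m := lt_min (by positivity) (by positivity)
  obtain ⟨C', hC', hdecay⟩ := exists_one_add_mul_exp_neg_le ha hm K
  refine ⟨C', hC', fun t ht => ?_⟩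
  rw [h1ε, hεθ]
  have hfirst : exp (-jb t ^ a / (a * C₀)) ≤ exp (-(m * jb t ^ a)) := by
    rw [show -jb t ^ a / (a * C₀) = -(1 / (a * C₀) * jb t ^ a) by ring]
    gcongr
    · exact rpow_nonneg (jb_pos t).le a
    · exact min_le_left _ _
  have hintegral : ∫ s in Icc 0 t,
      exp (-(jb t ^ a - jb s ^ a) / (a * C₀)) * jb s ^ (-ε) * exp (-2 * K * jb s ^ a) ≤
        exp (-(m * jb t ^ a)) * (t - 0) := setIntegral_Icc_le_of_abs_le ht fun s ⟨hs, hst⟩ => by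
    rw [abs_of_nonneg (by have := jb_pos s; positivity)]
    exact convolution_integrand_le (K := K) ha.le hε0 hs hst
  calc _ ≤ (1 + t) * exp (-(m * jb t ^ a)) := by linarith
    _ ≤ (1 + t) * exp (-(m * t ^ a)) := by gcongr; exact le_jb t
    _ ≤ C' * exp (-(K / C') * t ^ a) := hdecay t ht
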